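/- arXiv:1410.3058 — 2 statements merged into one kernel-verified Lean document; each statement's English description precedes it below -/
import Mathlib

section
/- Let L > 0, c > 0, ε > 0, and ω be such that 0 < ω < 2ε and ω ≤ 2c. Let f : ℝ × ℝ → ℝ be continuous, η : [0,∞) → ℝ be continuous and convex, and define α̂(s) := (π²/L²)(c − ε)·s + L·η(s/L) for s ≥ 0. Let x : [0,L] → ℝ be twice continuously differentiable with x(0) = x(L) = 0, let u : [0,L] → ℝ be continuous, and assume ∫₀^L x''(l) · f(x(l), x'(l)) dl ≥ ∫₀^L η(x'(l)²) dl. Then, writing Z := ∫₀^L x'(l)² dl, it holds that −2∫₀^L x''(l) · ( c·x''(l) + f(x(l), x'(l)) + x'(l)·u(l) ) dl ≤ 2(ω/2 − ε)(π²/L²)·Z − 2·α̂(Z) + (Z/ω)·sup_{l∈[0,L]} u(l)². -/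
/-!
Write `Z = ∫ x'²` and `A = ∫ x''²`. Young's inequality bounds the transport term
`-2 ∫ x'' x' u` by `ω A + (sup u² / ω) Z`; the hypothesis on `f` and Jensen's inequality for `η`
bound `-2 ∫ x'' f(x, x')` by `-2 L η(Z / L)`; and since `ω ≤ 2c`, the remaining `(ω - 2c) A` is at
most `(ω - 2c) (π² / L²) Z`. That last estimate `A ≥ k² Z` (`k = π / L`) comes from expanding
`0 ≤ ∫ (x'' + k² x)²`, integrating `x'' x` by parts to `-Z`, and Wirtinger's inequality
`k² ∫ x² ≤ Z`. Wirtinger's inequality in turn is the integral of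
`(x' - k cot(k l) x)² ≥ 0`, whose cross terms are the derivative of `k cot(k l) x²`; this
vanishes at both ends of `[0, L]` because `x` does.
-/

open Real MeasureTheory intervalIntegral Set Filter Topology

theorem tendsto_mul_div_of_hasDerivWithinAt {f h φ : ℝ → ℝ} {s : Set ℝ} {a f' h' : ℝ}
    (hf : HasDerivWithinAt f f' s a) (hh : HasDerivWithinAt h h' s a) (hh' : h' ≠ 0)
    (hfa : f a = 0) (hha : h a = 0) (hφ : Tendsto φ (𝓝[s \ {a}] a) (𝓝 0)) :
    Tendsto (fun l ↦ f l * φ l / h l) (𝓝[s \ {a}] a) (𝓝 0) := by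
  have hslope := ((hasDerivWithinAt_iff_tendsto_slope.mp hf).mul hφ).div
    (hasDerivWithinAt_iff_tendsto_slope.mp hh) hh'
  rw [mul_zero, zero_div] at hslope
  refine hslope.congr' ?_
  filter_upwards [self_mem_nhdsWithin] with l hl
  rw [Pi.div_apply, slope_def_field, slope_def_field, hfa, hha, sub_zero, sub_zero,
    div_mul_eq_mul_div, div_div_div_cancel_right₀ (sub_ne_zero.2 hl.2)]

theorem deriv_deriv_eq_derivWithin_derivWithin {f : ℝ → ℝ} {s : Set ℝ} {l : ℝ} (hs : s ∈ 𝓝 l) :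
    deriv (deriv f) l = derivWithin (derivWithin f s) s l := by
  have : deriv f =ᶠ[𝓝 l] derivWithin f s :=
    (eventually_mem_nhds_iff.2 hs).mono fun t ht ↦ (derivWithin_of_mem_nhds ht).symm
  rw [this.deriv_eq, derivWithin_of_mem_nhds hs]

theorem neg_two_mul_mul_mul_le_of_sq_le {ω S a b u : ℝ} (hω : 0 < ω) (hu : u ^ 2 ≤ S) :
    -2 * (a * (b * u)) ≤ ω * a ^ 2 + S / ω * b ^ 2 := by
  rw [div_mul_eq_mul_div, ← sub_nonneg]
  have : ω * a ^ 2 + S * b ^ 2 / ω - -2 * (a * (b * u)) =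
      ((ω * a + b * u) ^ 2 + (S - u ^ 2) * b ^ 2) / ω := by
    field_simp
    ring
  rw [this]
  exact div_nonneg (add_nonneg (sq_nonneg _) (mul_nonneg (sub_nonneg.2 hu) (sq_nonneg b))) hω.le

theorem ConvexOn.map_interval_average_le {η h : ℝ → ℝ} {s : Set ℝ} {a b : ℝ} (hab : a < b)
    (hη : ConvexOn ℝ s η) (hηc : ContinuousOn η s) (hs : IsClosed s)
    (hh : ContinuousOn h (Icc a b)) (hhs : ∀ l ∈ Icc a b, h l ∈ s) :
    η (⨍ l in a..b, h l) ≤ ⨍ l in a..b, η (h l) := by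
  rw [uIoc_of_le hab.le]
  refine hη.map_set_average_le hηc hs (by simp [hab]) (by simp) ?_
    ((hh.integrableOn_compact isCompact_Icc).mono_set Ioc_subset_Icc_self)
    (((hηc.comp hh hhs).integrableOn_compact isCompact_Icc).mono_set Ioc_subset_Icc_self)
  exact (ae_restrict_iff' measurableSet_Ioc).2
    (.of_forall fun l hl ↦ hhs l (Ioc_subset_Icc_self hl))

theorem hasDerivAt_mul_cos_mul_div_sin {x : ℝ → ℝ} {x' k l : ℝ} (hx : HasDerivAt x x' l)
    (hsin : sin (k * l) ≠ 0) :
    HasDerivAt (fun t ↦ x t * (k * cos (k * t) * x t) / sin (k * t))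
      (x' ^ 2 - k ^ 2 * x l ^ 2 - (x' - k * cos (k * l) / sin (k * l) * x l) ^ 2) l := by
  have hkl : HasDerivAt (fun t ↦ k * t) k l := by simpa using (hasDerivAt_id l).const_mul k
  refine ((hx.fun_mul ((hkl.cos.const_mul k).fun_mul hx)).fun_div hkl.sin hsin).congr_deriv ?_
  field_simp
  ring

theorem pi_sq_div_sq_mul_integral_sq_le {L : ℝ} (hL : 0 < L) {x x' : ℝ → ℝ}
    (hx : ∀ l ∈ Icc 0 L, HasDerivWithinAt x (x' l) (Icc 0 L) l)
    (hx' : ContinuousOn x' (Icc 0 L)) (hx0 : x 0 = 0) (hxL : x L = 0) :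
    π ^ 2 / L ^ 2 * ∫ l in 0..L, x l ^ 2 ≤ ∫ l in 0..L, x' l ^ 2 := by
  set k := π / L
  have hk : 0 < k := div_pos pi_pos hL
  have hkL : k * L = π := div_mul_cancel₀ π hL.ne'
  set G : ℝ → ℝ := fun t ↦ x t * (k * cos (k * t) * x t) / sin (k * t)
  have hxc : ContinuousOn x (Icc 0 L) := fun l hl ↦ (hx l hl).continuousWithinAt
  have hsin : ∀ l ∈ Ioo 0 L, sin (k * l) ≠ 0 := fun l hl ↦
    (sin_pos_of_pos_of_lt_pi (mul_pos hk hl.1) (hkL ▸ by gcongr; exact hl.2)).ne'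
  -- `G` vanishes at both ends only by the convention `a / 0 = 0`, but it is continuous there.
  have hG_end : ∀ a ∈ Icc 0 L, x a = 0 → sin (k * a) = 0 → ContinuousWithinAt G (Icc 0 L) a := by
    intro a ha hxa hsa
    have hcos : cos (k * a) * k ≠ 0 :=
      mul_ne_zero (fun h ↦ by simpa [hsa, h] using sin_sq_add_cos_sq (k * a)) hk.ne'
    have hφ : ContinuousWithinAt (fun t ↦ k * cos (k * t) * x t) (Icc 0 L \ {a}) a :=
      ((Continuous.continuousWithinAt (by fun_prop)).mul (hxc a ha)).mono sdiff_subset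
    rw [← continuousWithinAt_sdiff_self, ContinuousWithinAt, show G a = 0 by simp [G, hsa]]
    refine tendsto_mul_div_of_hasDerivWithinAt (hx a ha) ?_ hcos hxa hsa ?_
    · exact ((hasDerivAt_id a).const_mul k).sin.hasDerivWithinAt.congr_deriv (by simp)
    · simpa [hxa] using hφ.tendsto
  have hGc : ContinuousOn G (Icc 0 L) := by
    intro l hl
    rcases eq_endpoints_or_mem_Ioo_of_mem_Icc hl with rfl | rfl | hl'
    · exact hG_end 0 hl hx0 (by simp)
    · exact hG_end _ hl hxL (by rw [hkL, sin_pi])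
    · exact (hasDerivAt_mul_cos_mul_div_sin ((hx l hl).hasDerivAt (Icc_mem_nhds hl'.1 hl'.2))
        (hsin l hl')).continuousAt.continuousWithinAt
  have hGL : G L - G 0 ≤ ∫ l in 0..L, x' l ^ 2 - k ^ 2 * x l ^ 2 :=
    sub_le_integral_of_hasDeriv_right_of_le hL.le hGc
      (fun l hl ↦ (hasDerivAt_mul_cos_mul_div_sin ((hx l (Ioo_subset_Icc_self hl)).hasDerivAt
        (Icc_mem_nhds hl.1 hl.2)) (hsin l hl)).hasDerivWithinAt)
      (((hx'.pow 2).sub (continuousOn_const.mul (hxc.pow 2))).integrableOn_compact isCompact_Icc)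
      (fun l _ ↦ sub_le_self _ (sq_nonneg _))
  rw [show G L = 0 by simp [G, hkL], show G 0 = 0 by simp [G], sub_zero,
    integral_sub ((hx'.fun_pow 2).intervalIntegrable_of_Icc hL.le)
      ((hxc.fun_pow 2).intervalIntegrable_of_Icc hL.le |>.const_mul _),
    intervalIntegral.integral_const_mul] at hGL
  rw [← div_pow]
  linarith

theorem pi_sq_div_sq_mul_integral_sq_deriv_le {L : ℝ} (hL : 0 < L) {x x' x'' : ℝ → ℝ}
    (hx : ∀ l ∈ Icc 0 L, HasDerivWithinAt x (x' l) (Icc 0 L) l)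
    (hx' : ∀ l ∈ Icc 0 L, HasDerivWithinAt x' (x'' l) (Icc 0 L) l)
    (hx'' : ContinuousOn x'' (Icc 0 L)) (hx0 : x 0 = 0) (hxL : x L = 0) :
    π ^ 2 / L ^ 2 * ∫ l in 0..L, x' l ^ 2 ≤ ∫ l in 0..L, x'' l ^ 2 := by
  set k2 := π ^ 2 / L ^ 2
  have hxc : ContinuousOn x (Icc 0 L) := fun l hl ↦ (hx l hl).continuousWithinAt
  have hx'c : ContinuousOn x' (Icc 0 L) := fun l hl ↦ (hx' l hl).continuousWithinAt
  have hint : ∀ F : ℝ → ℝ, ContinuousOn F (Icc 0 L) → IntervalIntegrable F volume 0 L :=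
    fun F hF ↦ hF.intervalIntegrable_of_Icc hL.le
  have hinterior : ∀ {y y' : ℝ → ℝ}, (∀ l ∈ Icc 0 L, HasDerivWithinAt y (y' l) (Icc 0 L) l) →
      ∀ l ∈ Ioo (min 0 L) (max 0 L), HasDerivWithinAt y (y' l) (Ioi l) l := by
    intro y y' hy l hl
    rw [min_eq_left hL.le, max_eq_right hL.le] at hl
    exact ((hy l (Ioo_subset_Icc_self hl)).hasDerivAt (Icc_mem_nhds hl.1 hl.2)).hasDerivWithinAt
  have hparts : ∫ l in 0..L, x'' l * x l = -∫ l in 0..L, x' l ^ 2 := by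
    have := integral_deriv_mul_eq_sub_of_hasDeriv_right (by rwa [uIcc_of_le hL.le])
      (by rwa [uIcc_of_le hL.le]) (hinterior hx') (hinterior hx) (hint _ hx'') (hint _ hx'c)
    rw [hx0, hxL, mul_zero, mul_zero, sub_zero,
      integral_add (hint _ (hx''.fun_mul hxc)) (hint _ (hx'c.fun_mul hx'c))] at this
    simp only [← sq] at this
    linarith
  have hexpand : ∫ l in 0..L, (x'' l + k2 * x l) ^ 2 = (∫ l in 0..L, x'' l ^ 2) +
      2 * k2 * (∫ l in 0..L, x'' l * x l) + k2 ^ 2 * ∫ l in 0..L, x l ^ 2 := by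
    rw [← intervalIntegral.integral_const_mul, ← intervalIntegral.integral_const_mul,
      ← integral_add (hint _ (hx''.fun_pow 2)) ((hint _ (hx''.fun_mul hxc)).const_mul _),
      ← integral_add ((hint _ (hx''.fun_pow 2)).add ((hint _ (hx''.fun_mul hxc)).const_mul _))
        ((hint _ (hxc.fun_pow 2)).const_mul _)]
    exact integral_congr fun l _ ↦ by ring
  have hsq : 0 ≤ ∫ l in 0..L, (x'' l + k2 * x l) ^ 2 :=
    integral_nonneg hL.le fun l _ ↦ sq_nonneg _
  have hwirtinger := mul_le_mul_of_nonneg_left (pi_sq_div_sq_mul_integral_sq_le hL hx hx'c hx0 hxL)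
    (by positivity : 0 ≤ k2)
  rw [hparts] at hexpand
  linarith

theorem dissipation_estimate_of_hasDerivWithinAt {L c ω S : ℝ} (hL : 0 < L) (hω : 0 < ω)
    (hωc : ω ≤ 2 * c) {f : ℝ × ℝ → ℝ} (hf : Continuous f) {η : ℝ → ℝ}
    (hη : ContinuousOn η (Ici 0)) (hηconv : ConvexOn ℝ (Ici 0) η) {x x' x'' u : ℝ → ℝ}
    (hx : ∀ l ∈ Icc 0 L, HasDerivWithinAt x (x' l) (Icc 0 L) l)
    (hx' : ∀ l ∈ Icc 0 L, HasDerivWithinAt x' (x'' l) (Icc 0 L) l)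
    (hx'' : ContinuousOn x'' (Icc 0 L)) (hx0 : x 0 = 0) (hxL : x L = 0)
    (hu : ContinuousOn u (Icc 0 L)) (hS : ∀ l ∈ Icc 0 L, u l ^ 2 ≤ S)
    (hyp : ∫ l in 0..L, η (x' l ^ 2) ≤ ∫ l in 0..L, x'' l * f (x l, x' l)) :
    -2 * ∫ l in 0..L, x'' l * (c * x'' l + f (x l, x' l) + x' l * u l)
      ≤ (ω - 2 * c) * (π ^ 2 / L ^ 2) * (∫ l in 0..L, x' l ^ 2)
        - 2 * (L * η ((∫ l in 0..L, x' l ^ 2) / L)) + (∫ l in 0..L, x' l ^ 2) / ω * S := by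
  set Z := ∫ l in 0..L, x' l ^ 2
  set A := ∫ l in 0..L, x'' l ^ 2
  have hxc : ContinuousOn x (Icc 0 L) := fun l hl ↦ (hx l hl).continuousWithinAt
  have hx'c : ContinuousOn x' (Icc 0 L) := fun l hl ↦ (hx' l hl).continuousWithinAt
  have hint : ∀ F : ℝ → ℝ, ContinuousOn F (Icc 0 L) → IntervalIntegrable F volume 0 L :=
    fun F hF ↦ hF.intervalIntegrable_of_Icc hL.le
  have hfx : ContinuousOn (fun l ↦ f (x l, x' l)) (Icc 0 L) :=
    hf.comp_continuousOn (hxc.prodMk hx'c)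
  have hsplit : ∫ l in 0..L, x'' l * (c * x'' l + f (x l, x' l) + x' l * u l)
      = c * A + (∫ l in 0..L, x'' l * f (x l, x' l)) + ∫ l in 0..L, x'' l * (x' l * u l) := by
    rw [← intervalIntegral.integral_const_mul,
      ← integral_add ((hint _ (hx''.fun_pow 2)).const_mul _) (hint _ (hx''.fun_mul hfx)),
      ← integral_add (((hint _ (hx''.fun_pow 2)).const_mul _).add (hint _ (hx''.fun_mul hfx)))
        (hint _ (hx''.fun_mul (hx'c.fun_mul hu)))]
    exact integral_congr fun l _ ↦ by ring
  have hyoung : -2 * ∫ l in 0..L, x'' l * (x' l * u l) ≤ ω * A + S / ω * Z := by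
    rw [← intervalIntegral.integral_const_mul, ← intervalIntegral.integral_const_mul,
      ← intervalIntegral.integral_const_mul, ← integral_add ((hint _ (hx''.fun_pow 2)).const_mul _)
        ((hint _ (hx'c.fun_pow 2)).const_mul _)]
    exact integral_mono_on hL.le ((hint _ (hx''.fun_mul (hx'c.fun_mul hu))).const_mul _)
      (((hint _ (hx''.fun_pow 2)).const_mul _).add ((hint _ (hx'c.fun_pow 2)).const_mul _))
      fun l hl ↦ neg_two_mul_mul_mul_le_of_sq_le hω (hS l hl)
  have hjensen : L * η (Z / L) ≤ ∫ l in 0..L, η (x' l ^ 2) := by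
    have := hηconv.map_interval_average_le hL hη isClosed_Ici (hx'c.fun_pow 2)
      fun l _ ↦ sq_nonneg (x' l)
    rw [interval_average_eq_div, interval_average_eq_div, sub_zero, le_div_iff₀ hL] at this
    linarith
  have hA : (ω - 2 * c) * A ≤ (ω - 2 * c) * (π ^ 2 / L ^ 2 * Z) :=
    mul_le_mul_of_nonpos_left (pi_sq_div_sq_mul_integral_sq_deriv_le hL hx hx' hx'' hx0 hxL)
      (by linarith)
  rw [hsplit]
  have : Z / ω * S = S / ω * Z := by ring
  linarith

theorem dissipation_estimate_48_general (L c ε ω : ℝ) (hL : 0 < L)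
    (hω : 0 < ω) (hωc : ω ≤ 2 * c)
    (f : ℝ × ℝ → ℝ) (hf : Continuous f)
    (η : ℝ → ℝ) (hη : ContinuousOn η (Set.Ici 0))
    (hηconv : ConvexOn ℝ (Set.Ici 0) η)
    (αhat : ℝ → ℝ)
    (hαhat : ∀ s : ℝ, 0 ≤ s → αhat s = Real.pi ^ 2 / L ^ 2 * (c - ε) * s + L * η (s / L))
    (x : ℝ → ℝ) (hx : ContDiffOn ℝ 2 x (Set.Icc 0 L))
    (hx0 : x 0 = 0) (hxL : x L = 0)
    (u : ℝ → ℝ) (hu : ContinuousOn u (Set.Icc 0 L))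
    (hyp : ∫ l in (0:ℝ)..L, deriv (deriv x) l * f (x l, deriv x l)
            ≥ ∫ l in (0:ℝ)..L, η ((deriv x l) ^ 2)) :
    -2 * ∫ l in (0:ℝ)..L, deriv (deriv x) l *
        (c * deriv (deriv x) l + f (x l, deriv x l) + deriv x l * u l)
      ≤ 2 * (ω/2 - ε) * (Real.pi ^ 2 / L ^ 2) * (∫ l in (0:ℝ)..L, (deriv x l) ^ 2)
        - 2 * αhat (∫ l in (0:ℝ)..L, (deriv x l) ^ 2)
        + ((∫ l in (0:ℝ)..L, (deriv x l) ^ 2) / ω)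
            * ⨆ l : Set.Icc (0:ℝ) L, (u (l : ℝ)) ^ 2 := by
  have hIcc : UniqueDiffOn ℝ (Icc 0 L) := uniqueDiffOn_Icc hL
  set x' := derivWithin x (Icc 0 L)
  set x'' := derivWithin x' (Icc 0 L)
  have hx' : ContDiffOn ℝ 1 x' (Icc 0 L) := hx.derivWithin hIcc (by norm_num)
  have hx'_eq : EqOn (deriv x) x' (Ioo 0 L) := fun l hl ↦
    (derivWithin_of_mem_nhds (Icc_mem_nhds hl.1 hl.2)).symm
  have hx''_eq : EqOn (deriv (deriv x)) x'' (Ioo 0 L) := fun l hl ↦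
    deriv_deriv_eq_derivWithin_derivWithin (Icc_mem_nhds hl.1 hl.2)
  have hZ : ∫ l in 0..L, deriv x l ^ 2 = ∫ l in 0..L, x' l ^ 2 :=
    integral_congr_Ioo_of_le hL.le fun l hl ↦ by rw [hx'_eq hl]
  have hlhs : ∫ l in 0..L, deriv (deriv x) l * (c * deriv (deriv x) l + f (x l, deriv x l)
      + deriv x l * u l) = ∫ l in 0..L, x'' l * (c * x'' l + f (x l, x' l) + x' l * u l) :=
    integral_congr_Ioo_of_le hL.le fun l hl ↦ by rw [hx'_eq hl, hx''_eq hl]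
  have hyp' : ∫ l in 0..L, η (x' l ^ 2) ≤ ∫ l in 0..L, x'' l * f (x l, x' l) :=
    calc ∫ l in 0..L, η (x' l ^ 2) = ∫ l in 0..L, η (deriv x l ^ 2) :=
          integral_congr_Ioo_of_le hL.le fun l hl ↦ by rw [hx'_eq hl]
      _ ≤ ∫ l in 0..L, deriv (deriv x) l * f (x l, deriv x l) := hyp
      _ = ∫ l in 0..L, x'' l * f (x l, x' l) :=
          integral_congr_Ioo_of_le hL.le fun l hl ↦ by rw [hx'_eq hl, hx''_eq hl]
  have hS : ∀ l ∈ Icc 0 L, u l ^ 2 ≤ ⨆ l : Icc (0:ℝ) L, u l ^ 2 := fun l hl ↦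
    le_ciSup (image_eq_range _ _ ▸ isCompact_Icc.bddAbove_image (hu.pow 2)) ⟨l, hl⟩
  rw [hZ, hlhs, hαhat _ (integral_nonneg hL.le fun l _ ↦ sq_nonneg _)]
  have := dissipation_estimate_of_hasDerivWithinAt hL hω hωc hf hη hηconv
    (fun l hl ↦ ((hx.differentiableOn (by norm_num)) l hl).hasDerivWithinAt)
    (fun l hl ↦ ((hx'.differentiableOn (by norm_num)) l hl).hasDerivWithinAt)
    (hx'.continuousOn_derivWithin hIcc le_rfl) hx0 hxL hu hS hyp'
  linarith

/-- Core dissipation estimate (48) in the proof of Theorem 5.1 of the paper for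
`q = 1`: the Lie derivative of `Z(x) = ∫₀^L (x')² dl` along
`∂x/∂t = c ∂²x/∂l² + f(x, ∂x/∂l) + (∂x/∂l)·u` with Dirichlet boundary
conditions, where `α̂(s) = (π²/L²)(c−ε)s + L·η(s/L)`. -/
theorem dissipation_estimate_48 (L c ε ω : ℝ) (hL : 0 < L) (hc : 0 < c) (hε : 0 < ε)
    (hω : 0 < ω) (hωε : ω < 2 * ε) (hωc : ω ≤ 2 * c)
    (f : ℝ × ℝ → ℝ) (hf : Continuous f)
    (η : ℝ → ℝ) (hη : ContinuousOn η (Set.Ici 0))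
    (hηconv : ConvexOn ℝ (Set.Ici 0) η)
    (αhat : ℝ → ℝ)
    (hαhat : ∀ s : ℝ, 0 ≤ s → αhat s = Real.pi ^ 2 / L ^ 2 * (c - ε) * s + L * η (s / L))
    (x : ℝ → ℝ) (hx : ContDiffOn ℝ 2 x (Set.Icc 0 L))
    (hx0 : x 0 = 0) (hxL : x L = 0)
    (u : ℝ → ℝ) (hu : ContinuousOn u (Set.Icc 0 L))
    (hyp : ∫ l in (0:ℝ)..L, deriv (deriv x) l * f (x l, deriv x l)
            ≥ ∫ l in (0:ℝ)..L, η ((deriv x l) ^ 2)) :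
    -2 * ∫ l in (0:ℝ)..L, deriv (deriv x) l *
        (c * deriv (deriv x) l + f (x l, deriv x l) + deriv x l * u l)
      ≤ 2 * (ω/2 - ε) * (Real.pi ^ 2 / L ^ 2) * (∫ l in (0:ℝ)..L, (deriv x l) ^ 2)
        - 2 * αhat (∫ l in (0:ℝ)..L, (deriv x l) ^ 2)
        + ((∫ l in (0:ℝ)..L, (deriv x l) ^ 2) / ω)
            * ⨆ l : Set.Icc (0:ℝ) L, (u (l : ℝ)) ^ 2 :=
  dissipation_estimate_48_general L c ε ω hL hω hωc f hf η hη hηconv αhat hαhat x hx hx0 hxL u hu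
    hyp
end

section
/- Let a ∈ ℝ, b ≥ 0, and ω ∈ (0, 2]. Let x : [0,π] → ℝ be twice continuously differentiable with x(0) = x(π) = 0, and let u : [0,π] → ℝ be continuous. Then, writing Z := ∫₀^π x'(l)² dl, it holds that −2∫₀^π x''(l) · ( x''(l) + a·x(l) − b·x(l)·x'(l)² + u(l) ) dl ≤ −2(1 − a − ω/2)·Z − (2b/(3π))·Z² + (1/ω)·∫₀^π u(l)² dl. -/
/-!
Expanding the integrand and integrating by parts against `x(0) = x(π) = 0` turns `∫ x x''` into
`-Z` and `∫ x x'² x''` into `-(1/3) ∫ x'⁴`. Young's inequality trades `-2 ∫ x'' u` for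
`ω ∫ x''² + ω⁻¹ ∫ u²`, and the remaining `-(2 - ω) ∫ x''²` is at most `-(2 - ω) Z` because
`2 Z = -2 ∫ x x'' ≤ ∫ x² + ∫ x''² ≤ Z + ∫ x''²` by Wirtinger's inequality `∫ x² ≤ Z`.
Finally `Z² ≤ π ∫ x'⁴` by Cauchy–Schwarz against the constant `1`.

Wirtinger's inequality comes from a Riccati substitution: if `φ' = -k² - φ²`, then
`(x² φ)' = x'² - k² x² - (x' - x φ)²`, and integrating gives `k² ∫ x² ≤ ∫ x'²`. The solution
`φ = -k tan (k (l - (a + b) / 2))` is regular on `[a, b]` for every `k < π / (b - a)`.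
-/

open Real MeasureTheory intervalIntegral

open Set Filter Topology

theorem neg_two_mul_le_mul_sq_add_inv_mul_sq {ω : ℝ} (hω : 0 < ω) (p q : ℝ) :
    -2 * (p * q) ≤ ω * p ^ 2 + ω⁻¹ * q ^ 2 := by
  have hsq : ω * p ^ 2 + ω⁻¹ * q ^ 2 + 2 * (p * q) = ω⁻¹ * (ω * p + q) ^ 2 := by
    field_simp; ring
  have := mul_nonneg (inv_nonneg.2 hω.le) (sq_nonneg (ω * p + q))
  linarith

theorem sq_integral_le_sub_mul_integral_sq {f : ℝ → ℝ} {a b : ℝ} (hab : a ≤ b)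
    (hf : IntervalIntegrable f volume a b)
    (hf2 : IntervalIntegrable (fun l => f l ^ 2) volume a b) :
    (∫ l in a..b, f l) ^ 2 ≤ (b - a) * ∫ l in a..b, f l ^ 2 := by
  have hquad : ∀ t : ℝ,
      0 ≤ (b - a) * (t * t) + 2 * (∫ l in a..b, f l) * t + ∫ l in a..b, f l ^ 2 := by
    intro t
    have hexp : ∫ l in a..b, (f l + t) ^ 2
        = (b - a) * (t * t) + 2 * (∫ l in a..b, f l) * t + ∫ l in a..b, f l ^ 2 := by
      simp_rw [show ∀ l, (f l + t) ^ 2 = f l ^ 2 + 2 * t * f l + t * t from fun l => by ring]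
      rw [integral_add (hf2.add (hf.const_mul _)) intervalIntegrable_const,
        integral_add hf2 (hf.const_mul _), intervalIntegral.integral_const_mul,
        intervalIntegral.integral_const, smul_eq_mul]
      ring
    exact hexp ▸ integral_nonneg hab fun l _ => sq_nonneg _
  have hdisc := discrim_le_zero hquad
  rw [discrim] at hdisc
  linarith

theorem integral_mul_deriv_eq_neg_integral_deriv_mul_of_eq_zero {u u' v v' : ℝ → ℝ} {a b : ℝ}
    (hab : a ≤ b) (hu : ContinuousOn u (Icc a b)) (hv : ContinuousOn v (Icc a b))
    (huu' : ∀ l ∈ Ioo a b, HasDerivAt u (u' l) l) (hvv' : ∀ l ∈ Ioo a b, HasDerivAt v (v' l) l)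
    (hu' : IntervalIntegrable u' volume a b) (hv' : IntervalIntegrable v' volume a b)
    (ha : u a = 0) (hb : u b = 0) :
    ∫ l in a..b, u l * v' l = -∫ l in a..b, u' l * v l := by
  rw [integral_mul_deriv_eq_deriv_mul_of_hasDerivAt (uIcc_of_le hab ▸ hu) (uIcc_of_le hab ▸ hv)
    (by simpa [hab] using huu') (by simpa [hab] using hvv') hu' hv', ha, hb]
  ring

theorem sq_mul_integral_sq_le_integral_sq_deriv_of_riccati {x x' φ : ℝ → ℝ} {a b k : ℝ}
    (hab : a ≤ b) (hx : ContinuousOn x (Icc a b)) (hx' : ContinuousOn x' (Icc a b))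
    (hφ : ContinuousOn φ (Icc a b)) (hxx' : ∀ l ∈ Ioo a b, HasDerivAt x (x' l) l)
    (hφφ' : ∀ l ∈ Ioo a b, HasDerivAt φ (-k ^ 2 - φ l ^ 2) l) (ha : x a = 0) (hb : x b = 0) :
    k ^ 2 * ∫ l in a..b, x l ^ 2 ≤ ∫ l in a..b, x' l ^ 2 := by
  have hint {f : ℝ → ℝ} (hf : ContinuousOn f (Icc a b)) : IntervalIntegrable f volume a b :=
    hf.intervalIntegrable_of_Icc hab
  have hftc : ∫ l in a..b, (x' l ^ 2 - k ^ 2 * x l ^ 2 - (x' l - x l * φ l) ^ 2) = 0 := by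
    rw [integral_eq_sub_of_hasDerivAt_of_le (f := fun l => x l ^ 2 * φ l) hab (by fun_prop)
      (fun l hl => ?_) (hint (by fun_prop))]
    · simp [ha, hb]
    · exact (((hxx' l hl).fun_pow 2).fun_mul (hφφ' l hl)).congr_deriv (by norm_num; ring)
  rw [integral_sub (hint (by fun_prop)) (hint (by fun_prop)),
    integral_sub (hint (by fun_prop)) (hint (by fun_prop)),
    intervalIntegral.integral_const_mul] at hftc
  have hrem : 0 ≤ ∫ l in a..b, (x' l - x l * φ l) ^ 2 :=
    integral_nonneg hab fun l _ => sq_nonneg _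
  linarith

theorem hasDerivAt_neg_mul_tan {k m l : ℝ} (hcos : cos (k * (l - m)) ≠ 0) :
    HasDerivAt (fun l => -k * tan (k * (l - m))) (-k ^ 2 - (-k * tan (k * (l - m))) ^ 2) l := by
  have := (Real.hasDerivAt_tan hcos).comp l (((hasDerivAt_id l).sub_const m).const_mul k)
  refine (this.const_mul (-k)).congr_deriv ?_
  rw [tan_eq_sin_div_cos]
  field_simp
  linear_combination k ^ 2 * sin_sq_add_cos_sq (k * (l - m))

theorem cos_mul_sub_midpoint_pos {a b k l : ℝ} (hk : 0 ≤ k) (hkab : k * (b - a) < π)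
    (hl : l ∈ Icc a b) :
    0 < cos (k * (l - (a + b) / 2)) := by
  have hle : k * (l - (a + b) / 2) ≤ k * ((b - a) / 2) :=
    mul_le_mul_of_nonneg_left (by linarith [hl.2]) hk
  have hge : k * (-((b - a) / 2)) ≤ k * (l - (a + b) / 2) :=
    mul_le_mul_of_nonneg_left (by linarith [hl.1]) hk
  exact cos_pos_of_mem_Ioo ⟨by linarith, by linarith⟩

theorem sq_pi_div_mul_integral_sq_le_integral_sq_deriv {x x' : ℝ → ℝ} {a b : ℝ} (hab : a < b)
    (hx : ContinuousOn x (Icc a b)) (hx' : ContinuousOn x' (Icc a b))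
    (hxx' : ∀ l ∈ Ioo a b, HasDerivAt x (x' l) l) (ha : x a = 0) (hb : x b = 0) :
    (π / (b - a)) ^ 2 * ∫ l in a..b, x l ^ 2 ≤ ∫ l in a..b, x' l ^ 2 := by
  have hba : 0 < b - a := sub_pos.2 hab
  have hlim : Tendsto (fun k : ℝ => k ^ 2 * ∫ l in a..b, x l ^ 2) (𝓝[<] (π / (b - a)))
      (𝓝 ((π / (b - a)) ^ 2 * ∫ l in a..b, x l ^ 2)) :=
    ((continuous_pow 2).mul continuous_const).continuousAt.tendsto.mono_left nhdsWithin_le_nhds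
  refine le_of_tendsto hlim ?_
  filter_upwards [Ioo_mem_nhdsLT (by positivity : 0 < π / (b - a))] with k hk
  have hkab : k * (b - a) < π := (lt_div_iff₀ hba).1 hk.2
  have hφφ' (l : ℝ) (hl : l ∈ Icc a b) := hasDerivAt_neg_mul_tan (m := (a + b) / 2)
    (cos_mul_sub_midpoint_pos hk.1.le hkab hl).ne'
  exact sq_mul_integral_sq_le_integral_sq_deriv_of_riccati hab.le hx hx'
    (fun l hl => (hφφ' l hl).continuousAt.continuousWithinAt) hxx'
    (fun l hl => hφφ' l (Ioo_subset_Icc_self hl)) ha hb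

theorem neg_two_mul_integral_mul_le {p q : ℝ → ℝ} {a b ω : ℝ} (hab : a ≤ b) (hω : 0 < ω)
    (hpq : IntervalIntegrable (fun l => p l * q l) volume a b)
    (hp : IntervalIntegrable (fun l => p l ^ 2) volume a b)
    (hq : IntervalIntegrable (fun l => q l ^ 2) volume a b) :
    -2 * ∫ l in a..b, p l * q l ≤ ω * (∫ l in a..b, p l ^ 2) + ω⁻¹ * ∫ l in a..b, q l ^ 2 := by
  simp only [← intervalIntegral.integral_const_mul]
  rw [← integral_add (hp.const_mul ω) (hq.const_mul ω⁻¹)]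
  exact integral_mono_on hab (hpq.const_mul _) ((hp.const_mul ω).add (hq.const_mul ω⁻¹))
    fun l _ => neg_two_mul_le_mul_sq_add_inv_mul_sq hω _ _

theorem hasDerivAt_derivWithin_Icc {f : ℝ → ℝ} {a b l : ℝ} (hf : DifferentiableOn ℝ f (Icc a b))
    (hl : l ∈ Ioo a b) : HasDerivAt f (derivWithin f (Icc a b) l) l := by
  have hmem := Icc_mem_nhds hl.1 hl.2
  rw [derivWithin_of_mem_nhds hmem]
  exact (hf.differentiableAt hmem).hasDerivAt

theorem dissipation_estimate_of_hasDerivAt {a b ω : ℝ} (hb : 0 ≤ b) (hω0 : 0 < ω) (hω2 : ω ≤ 2)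
    {x g h u : ℝ → ℝ} (hx : ContinuousOn x (Icc 0 π)) (hg : ContinuousOn g (Icc 0 π))
    (hh : ContinuousOn h (Icc 0 π)) (hu : ContinuousOn u (Icc 0 π))
    (hxg : ∀ l ∈ Ioo 0 π, HasDerivAt x (g l) l) (hgh : ∀ l ∈ Ioo 0 π, HasDerivAt g (h l) l)
    (hx0 : x 0 = 0) (hxπ : x π = 0) :
    -2 * ∫ l in (0:ℝ)..π, h l * (h l + a * x l - b * x l * g l ^ 2 + u l)
      ≤ -2 * (1 - a - ω / 2) * (∫ l in (0:ℝ)..π, g l ^ 2)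
        - (2 * b / (3 * π)) * (∫ l in (0:ℝ)..π, g l ^ 2) ^ 2
        + (1 / ω) * ∫ l in (0:ℝ)..π, u l ^ 2 := by
  have hint {f : ℝ → ℝ} (hf : ContinuousOn f (Icc 0 π)) : IntervalIntegrable f volume 0 π :=
    hf.intervalIntegrable_of_Icc pi_nonneg
  have hxh : ∫ l in (0:ℝ)..π, x l * h l = -∫ l in (0:ℝ)..π, g l ^ 2 := by
    rw [integral_mul_deriv_eq_neg_integral_deriv_mul_of_eq_zero pi_nonneg hx hg hxg hgh
      (hint hg) (hint hh) hx0 hxπ]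
    simp_rw [sq]
  have hxg2h : ∫ l in (0:ℝ)..π, x l * (g l ^ 2 * h l)
      = -(1 / 3) * ∫ l in (0:ℝ)..π, (g l ^ 2) ^ 2 := by
    rw [integral_mul_deriv_eq_neg_integral_deriv_mul_of_eq_zero (v := fun l => g l ^ 3 / 3)
      pi_nonneg hx (by fun_prop) hxg
      (fun l hl => ((hgh l hl).fun_pow 3).div_const 3 |>.congr_deriv (by norm_num; ring))
      (hint hg) (hint (by fun_prop)) hx0 hxπ, ← intervalIntegral.integral_neg,
      ← intervalIntegral.integral_const_mul]
    exact integral_congr fun l _ => by ring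
  have hexpand : ∫ l in (0:ℝ)..π, h l * (h l + a * x l - b * x l * g l ^ 2 + u l)
      = (∫ l in (0:ℝ)..π, h l ^ 2) + a * (∫ l in (0:ℝ)..π, x l * h l)
        - b * (∫ l in (0:ℝ)..π, x l * (g l ^ 2 * h l)) + ∫ l in (0:ℝ)..π, h l * u l := by
    simp only [← intervalIntegral.integral_const_mul]
    rw [← intervalIntegral.integral_add, ← intervalIntegral.integral_sub,
      ← intervalIntegral.integral_add]
    · congr 1; ext l; ring
    all_goals exact hint (by fun_prop)
  have hyoung := neg_two_mul_integral_mul_le pi_nonneg hω0 (hint (hh.mul hu)) (hint (by fun_prop))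
    (hint (by fun_prop))
  have hpoincare : ∫ l in (0:ℝ)..π, g l ^ 2 ≤ ∫ l in (0:ℝ)..π, h l ^ 2 := by
    have hwirtinger := sq_pi_div_mul_integral_sq_le_integral_sq_deriv pi_pos hx hg hxg hx0 hxπ
    rw [sub_zero, div_self pi_ne_zero, one_pow, one_mul] at hwirtinger
    have hyoung₁ := neg_two_mul_integral_mul_le pi_nonneg one_pos (hint (hx.mul hh))
      (hint (by fun_prop)) (hint (by fun_prop))
    rw [hxh, inv_one] at hyoung₁
    linarith
  have hcauchy := sq_integral_le_sub_mul_integral_sq (f := fun l => g l ^ 2) pi_nonneg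
    (hint (hg.pow 2)) (hint (by fun_prop))
  rw [sub_zero] at hcauchy
  have hquartic : 2 * b / (3 * π) * (∫ l in (0:ℝ)..π, g l ^ 2) ^ 2
      ≤ 2 * b / 3 * ∫ l in (0:ℝ)..π, (g l ^ 2) ^ 2 := by
    calc _ ≤ 2 * b / (3 * π) * (π * ∫ l in (0:ℝ)..π, (g l ^ 2) ^ 2) := by gcongr
      _ = _ := by field_simp
  rw [hexpand, hxh, hxg2h, one_div ω]
  linarith [mul_nonneg (sub_nonneg.2 hω2) (sub_nonneg.2 hpoincare)]

/-- Dissipation estimate (59) for the second subsystem of Example 1 of the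
paper: the Lie derivative of `V₂(x) = ∫₀^π (x')² dl` along
`∂x/∂t = ∂²x/∂l² + a·x − b·x·(∂x/∂l)² + u` with Dirichlet boundary
conditions, where `Z = ∫₀^π (x')² dl`. -/
theorem dissipation_estimate_59 (a b ω : ℝ) (hb : 0 ≤ b) (hω0 : 0 < ω) (hω2 : ω ≤ 2)
    (x : ℝ → ℝ) (hx : ContDiffOn ℝ 2 x (Set.Icc 0 Real.pi))
    (hx0 : x 0 = 0) (hxpi : x Real.pi = 0)
    (u : ℝ → ℝ) (hu : ContinuousOn u (Set.Icc 0 Real.pi)) :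
    -2 * ∫ l in (0:ℝ)..Real.pi, deriv (deriv x) l *
        (deriv (deriv x) l + a * x l - b * x l * (deriv x l) ^ 2 + u l)
      ≤ -2 * (1 - a - ω/2) * (∫ l in (0:ℝ)..Real.pi, (deriv x l) ^ 2)
        - (2 * b / (3 * Real.pi)) * (∫ l in (0:ℝ)..Real.pi, (deriv x l) ^ 2) ^ 2
        + (1/ω) * ∫ l in (0:ℝ)..Real.pi, (u l) ^ 2 := by
  set g := derivWithin x (Icc 0 π)
  set h := derivWithin g (Icc 0 π)
  have hs : UniqueDiffOn ℝ (Icc 0 π) := uniqueDiffOn_Icc pi_pos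
  have hg : ContDiffOn ℝ 1 g (Icc 0 π) := hx.derivWithin hs le_rfl
  have hxg (l : ℝ) (hl : l ∈ Ioo 0 π) : HasDerivAt x (g l) l :=
    hasDerivAt_derivWithin_Icc (hx.differentiableOn two_ne_zero) hl
  have hgh (l : ℝ) (hl : l ∈ Ioo 0 π) : HasDerivAt g (h l) l :=
    hasDerivAt_derivWithin_Icc (hg.differentiableOn one_ne_zero) hl
  have hderiv : EqOn (deriv x) g (Ioo 0 π) := fun l hl => (hxg l hl).deriv
  have hderiv2 : EqOn (deriv (deriv x)) h (Ioo 0 π) := fun l hl =>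
    ((hgh l hl).congr_of_eventuallyEq
      (hderiv.eventuallyEq_of_mem (Ioo_mem_nhds hl.1 hl.2))).deriv
  have hZ : ∫ l in (0:ℝ)..π, deriv x l ^ 2 = ∫ l in (0:ℝ)..π, g l ^ 2 :=
    integral_congr_Ioo_of_le pi_nonneg fun l hl => by simp only [hderiv hl]
  have hV : ∫ l in (0:ℝ)..π,
        deriv (deriv x) l * (deriv (deriv x) l + a * x l - b * x l * deriv x l ^ 2 + u l)
      = ∫ l in (0:ℝ)..π, h l * (h l + a * x l - b * x l * g l ^ 2 + u l) :=
    integral_congr_Ioo_of_le pi_nonneg fun l hl => by simp only [hderiv hl, hderiv2 hl]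
  rw [hZ, hV]
  exact dissipation_estimate_of_hasDerivAt hb hω0 hω2 hx.continuousOn hg.continuousOn
    (hg.continuousOn_derivWithin hs le_rfl) hu hxg hgh hx0 hxpi
end
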